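/- arXiv:2307.03745 — 2 statements merged into one kernel-verified Lean document; each statement's English description precedes it below -/
import Mathlib

section
/- Let S = F[x_0,…,x_n] be a polynomial ring over a field F of characteristic p > 0 with p ≥ n and n ≥ 1, and let m = (x_0,…,x_n). Let f ∈ S be homogeneous of degree d whose Jacobian ideal J = (∂f/∂x_0,…,∂f/∂x_n) satisfies m^{n(d−2)+d} ⊆ J + fS (as holds when Proj S/fS is smooth). Let q = p^e with e ≥ 1, and let s ∈ S be homogeneous of degree (n+1)q/p − d such that s^p ∉ m^{[q]}. Then f^{p−n} s^p ∉ m^{[q]}. -/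
/-!
Write `q = p^(e+1)` and `m^[q] = (x_i^q)`. Since `p ∣ q`, every `∂/∂x_i` preserves `m^[q]` and
kills `s^p`. Hence if `f^(t+1) s^p ∈ m^[q]` with `t + 1 < p`, differentiating gives
`J f^t s^p ⊆ m^[q]`, so `m^N f^t s^p ⊆ (J + fS) f^t s^p ⊆ m^[q]` for `N = n(d-2)+d`. As long as
`deg(f^t s^p) + N` does not exceed the socle degree `(n+1)(q-1)` of `S/m^[q]`, this forces
`f^t s^p ∈ m^[q]`. Descending from `t = p - n` to `t = 0` contradicts `s^p ∉ m^[q]`. When `d = 0`,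
`deg s^p = (n+1)q` already exceeds the socle degree, so `s^p ∈ m^[q]` outright.
-/

open MvPolynomial

theorem Finsupp.degree_le_card_mul_of_forall_lt {σ : Type*} [Fintype σ] {q : ℕ} {a : σ →₀ ℕ}
    (ha : ∀ i, a i < q) :
    a.degree ≤ Fintype.card σ * (q - 1) := by
  calc a.degree = ∑ i, a i := a.degree_eq_sum
    _ ≤ ∑ _i : σ, (q - 1) := Finset.sum_le_sum fun i _ => Nat.le_sub_one_of_lt (ha i)
    _ = Fintype.card σ * (q - 1) := by simp

namespace MvPolynomial

variable {σ R : Type*} [CommRing R]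

variable (σ R) in
noncomputable abbrev idealOfVarPowers (q : ℕ) : Ideal (MvPolynomial σ R) :=
  .span (.range fun i => X i ^ q)

theorem mem_idealOfVarPowers_iff {q : ℕ} {x : MvPolynomial σ R} :
    x ∈ idealOfVarPowers σ R q ↔ ∀ a ∈ x.support, ∃ i, q ≤ a i := by
  have : (Set.range fun i => (X i : MvPolynomial σ R) ^ q) =
      (monomial · 1) '' Set.range fun i => Finsupp.single i q := by
    rw [← Set.range_comp]
    congr 1
    ext1 i
    exact X_pow_eq_monomial
  simp only [idealOfVarPowers, this, mem_ideal_span_monomial_image, Set.exists_range_iff,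
    Finsupp.single_le_iff]

theorem pderiv_mem_idealOfVarPowers {q : ℕ} (hq : (q : R) = 0) (i : σ) {x : MvPolynomial σ R}
    (hx : x ∈ idealOfVarPowers σ R q) : pderiv i x ∈ idealOfVarPowers σ R q := by
  induction hx using Submodule.span_induction with
  | mem y hy =>
    obtain ⟨j, rfl⟩ := hy
    rw [pderiv_pow, ← map_natCast C, hq, map_zero, zero_mul]
    exact zero_mem _
  | zero => simp
  | add a b _ _ ha hb => simpa using add_mem ha hb
  | smul r y hy hpy =>
    rw [smul_eq_mul, Derivation.leibniz, smul_eq_mul, smul_eq_mul]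
    exact add_mem (Ideal.mul_mem_left _ _ hpy) (Ideal.mul_mem_right _ _ hy)

theorem exists_forall_lt_of_notMem_idealOfVarPowers {q : ℕ} {x : MvPolynomial σ R}
    (hx : x ∉ idealOfVarPowers σ R q) : ∃ a ∈ x.support, ∀ i, a i < q := by
  simpa [mem_idealOfVarPowers_iff] using hx

theorem mem_idealOfVarPowers_of_lt_degree [Fintype σ] {q D : ℕ} {g : MvPolynomial σ R}
    (hg : g.IsHomogeneous D) (hD : Fintype.card σ * (q - 1) < D) :
    g ∈ idealOfVarPowers σ R q := by
  by_contra hgq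
  obtain ⟨a, ha, ha_lt⟩ := exists_forall_lt_of_notMem_idealOfVarPowers hgq
  have : a.degree = D := (hg.degree_eq_sum_deg_support ha).symm
  exact hD.not_ge (this ▸ Finsupp.degree_le_card_mul_of_forall_lt ha_lt)

theorem mem_idealOfVarPowers_of_pow_le_colon [Fintype σ] {q D N : ℕ} {g : MvPolynomial σ R}
    (hg : g.IsHomogeneous D) (hD : D + N ≤ Fintype.card σ * (q - 1))
    (hcolon : idealOfVars σ R ^ N ≤ (idealOfVarPowers σ R q).colon (Ideal.span {g})) :
    g ∈ idealOfVarPowers σ R q := by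
  by_contra hgq
  obtain ⟨a, ha, ha_lt⟩ := exists_forall_lt_of_notMem_idealOfVarPowers hgq
  -- `x^b` completes the monomial `x^a` of `g` to the socle monomial `∏ x_i^(q-1)`.
  set b : σ →₀ ℕ := Finsupp.equivFunOnFinite.symm fun i => q - 1 - a i
  have hab : ∀ i, (b + a) i = q - 1 := fun i => by
    simp only [Finsupp.coe_add, Finsupp.coe_equivFunOnFinite_symm, Pi.add_apply, b]
    have := ha_lt i
    omega
  have hb_deg : N ≤ b.degree := by
    have : b.degree + a.degree = Fintype.card σ * (q - 1) := by
      rw [← map_add, Finsupp.degree_eq_sum]; simp [hab]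
    have : a.degree = D := (hg.degree_eq_sum_deg_support ha).symm
    omega
  have hb : monomial b (1 : R) ∈ idealOfVars σ R ^ N := by
    rw [mem_pow_idealOfVars_iff]
    intro x hx
    rwa [Finset.mem_singleton.mp (support_monomial_subset hx)]
  have hbg := Ideal.mem_colon_span_singleton.mp (hcolon hb)
  obtain ⟨i, hi⟩ := mem_idealOfVarPowers_iff.mp hbg (b + a) (by
    rw [mem_support_iff, coeff_monomial_mul, one_mul]; exact mem_support_iff.mp ha)
  have := ha_lt i
  rw [hab] at hi
  omega

theorem pow_mul_mem_idealOfVarPowers_of_pow_succ_mul_mem [Fintype σ] {q d D N t : ℕ}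
    {f g : MvPolynomial σ R} (hq : (q : R) = 0) (hf : f.IsHomogeneous d)
    (hg : g.IsHomogeneous D) (hg_pderiv : ∀ i, pderiv i g = 0) (ht : IsUnit ((t + 1 : ℕ) : R))
    (hJac : idealOfVars σ R ^ N ≤ Ideal.span (Set.range fun i => pderiv i f) + Ideal.span {f})
    (hdeg : d * t + D + N ≤ Fintype.card σ * (q - 1))
    (hmem : f ^ (t + 1) * g ∈ idealOfVarPowers σ R q) :
    f ^ t * g ∈ idealOfVarPowers σ R q := by
  have hpderiv (i : σ) : pderiv i f * (f ^ t * g) ∈ idealOfVarPowers σ R q := by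
    have h := pderiv_mem_idealOfVarPowers hq i hmem
    rw [pderiv_mul, hg_pderiv, mul_zero, add_zero, pderiv_pow, Nat.add_sub_cancel,
      ← map_natCast C, show ∀ c : MvPolynomial σ R, c * f ^ t * pderiv i f * g =
        c * (pderiv i f * (f ^ t * g)) from fun c => by ring] at h
    exact (Ideal.unit_mul_mem_iff_mem _ (ht.map C)).mp h
  refine mem_idealOfVarPowers_of_pow_le_colon ((hf.pow t).mul hg) hdeg (hJac.trans ?_)
  rw [Ideal.add_eq_sup, sup_le_iff, Ideal.span_le, Ideal.span_le, Set.range_subset_iff,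
    Set.singleton_subset_iff]
  refine ⟨fun i => Ideal.mem_colon_span_singleton.mpr (hpderiv i),
    Ideal.mem_colon_span_singleton.mpr ?_⟩
  rwa [← mul_assoc, ← pow_succ']

end MvPolynomial

theorem jacobian_degree_bound {n d p Q Ds t : ℕ} (hn : 1 ≤ n) (hd : 1 ≤ d) (ht : t + n < p)
    (hDs : Ds * p + d * p = (n + 1) * Q) :
    d * t + Ds * p + ((n : ℤ) * ((d : ℤ) - 2) + d).toNat ≤ (n + 1) * (Q - 1) := by
  have hQ : 1 ≤ Q := Nat.pos_of_ne_zero fun hQ => by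
    have := Nat.mul_pos hd (show 0 < p by omega)
    simp only [hQ, mul_zero] at hDs
    omega
  have hdp : d * (n + 1) ≤ d * (p - t) := Nat.mul_le_mul_left d (by omega)
  zify [hQ, ht.le.trans' (Nat.le_add_right t n)] at hDs hdp ⊢
  rw [Int.toNat_eq_max]
  rcases le_total 0 ((n : ℤ) * ((d : ℤ) - 2) + d) with hpos | hneg
  · rw [max_eq_left hpos]; nlinarith
  · rw [max_eq_right hneg]; nlinarith

theorem stmt_3_general {F : Type*} [Field F] (p : ℕ) (hp : p.Prime) [CharP F p]
    (n d e Ds : ℕ) (hn : 1 ≤ n)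
    (f s : MvPolynomial (Fin (n + 1)) F)
    (hf : f.IsHomogeneous d)
    (m J mq : Ideal (MvPolynomial (Fin (n + 1)) F))
    (hm : m = Ideal.span (Set.range X))
    (hJ : J = Ideal.span (Set.range fun i => pderiv i f))
    (hJac : m ^ (((n : ℤ) * ((d : ℤ) - 2) + d).toNat) ≤ J + Ideal.span {f})
    (hmq : mq = Ideal.span (Set.range fun i => X i ^ p ^ (e + 1)))
    (hDs : (Ds : ℤ) = ((n : ℤ) + 1) * (p : ℤ) ^ e - d)
    (hs : s.IsHomogeneous Ds)
    (hsq : s ^ p ∉ mq) :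
    f ^ (p - n) * s ^ p ∉ mq := by
  subst hm hJ hmq
  have hDs' : Ds * p + d * p = (n + 1) * p ^ (e + 1) := by
    zify; rw [hDs, pow_succ]; ring
  have hq : ((p ^ (e + 1) : ℕ) : F) = 0 := by simp
  have hsp_pderiv (i : Fin (n + 1)) : pderiv i (s ^ p) = 0 := by simp
  rcases Nat.eq_zero_or_pos d with rfl | hd
  · refine absurd (mem_idealOfVarPowers_of_lt_degree (hs.pow p) ?_) hsq
    calc Fintype.card (Fin (n + 1)) * (p ^ (e + 1) - 1) < (n + 1) * p ^ (e + 1) := by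
          rw [Fintype.card_fin]
          exact Nat.mul_lt_mul_of_pos_left (Nat.sub_lt (pow_pos hp.pos _) one_pos) n.succ_pos
      _ = Ds * p := by simpa using hDs'.symm
  intro hmem
  have hunit (t : ℕ) (ht : t + n < p) : IsUnit ((t + 1 : ℕ) : F) := by
    rw [isUnit_iff_ne_zero, Ne, CharP.cast_eq_zero_iff F p]
    exact Nat.not_dvd_of_pos_of_lt t.succ_pos (by omega)
  have hdescent : f ^ 0 * s ^ p ∈ idealOfVarPowers (Fin (n + 1)) F (p ^ (e + 1)) :=
    Nat.decreasingInduction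
      (motive := fun t _ => f ^ t * s ^ p ∈ idealOfVarPowers (Fin (n + 1)) F (p ^ (e + 1)))
      (fun t ht h => pow_mul_mem_idealOfVarPowers_of_pow_succ_mul_mem hq hf (hs.pow p)
        hsp_pderiv (hunit t (by omega)) hJac
        (by simpa using jacobian_degree_bound hn hd (by omega) hDs') h)
      hmem (Nat.zero_le _)
  exact hsq (by simpa using hdescent)

/-- **Algebraic core of Theorem 1.2(2).** Let `S = F[x_0, …, x_n]`, `char F = p ≥ n`,
`n ≥ 1`, and let `f` be homogeneous of degree `d` with Jacobian ideal `J` satisfying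
`m^(n(d-2)+d) ⊆ J + fS`.  Let `q = p^(e+1)` (so `e + 1 ≥ 1`, i.e. `q` is a power of `p`
divisible by `p`), and let `s` be homogeneous of degree `(n+1)q/p - d` with
`s^p ∉ m^{[q]}`.  Then `f^(p-n) * s^p ∉ m^{[q]}`. -/
theorem stmt_3 {F : Type*} [Field F] (p : ℕ) (hp : p.Prime) [CharP F p]
    (n d e Ds : ℕ) (hn : 1 ≤ n) (hpn : n ≤ p)
    (f s : MvPolynomial (Fin (n + 1)) F)
    (hf : f.IsHomogeneous d)
    (m J mq : Ideal (MvPolynomial (Fin (n + 1)) F))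
    (hm : m = Ideal.span (Set.range X))
    (hJ : J = Ideal.span (Set.range fun i => pderiv i f))
    (hJac : m ^ (((n : ℤ) * ((d : ℤ) - 2) + d).toNat) ≤ J + Ideal.span {f})
    (hmq : mq = Ideal.span (Set.range fun i => X i ^ p ^ (e + 1)))
    (hDs : (Ds : ℤ) = ((n : ℤ) + 1) * (p : ℤ) ^ e - d)
    (hs : s.IsHomogeneous Ds)
    (hsq : s ^ p ∉ mq) :
    f ^ (p - n) * s ^ p ∉ mq :=
  stmt_3_general p hp n d e Ds hn f s hf m J mq hm hJ hJac hmq hDs hs hsq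
end

section
/- Let F be a field, let n ≥ 2 and k ≥ 1 be integers, and consider the polynomial ring F[y_0,…,y_n]. Then y_0^{nk−1} belongs to the ideal (y_1^k, …, y_n^k, (y_0 + y_1 + ⋯ + y_n)^{n−1}). -/
open MvPolynomial

namespace Ideal

variable {R : Type*} [CommRing R] {I : Ideal R}

theorem sum_pow_mem_of_forall_pow_mem {ι : Type*} (s : Finset ι) (f : ι → R) {k : ℕ}
    (hf : ∀ i ∈ s, f i ^ (k + 1) ∈ I) : (∑ i ∈ s, f i) ^ (s.card * k + 1) ∈ I := by
  refine span_le.mpr ?_ (sum_pow_mem_span_pow s f k)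
  rintro _ ⟨i, hi, rfl⟩
  exact hf i hi

/-- Since `p + (n * k + 1) = (p + n * k) + 1`, every binomial term of
`((∑ i, x i) - ∑ i, x i.succ) ^ (p + n * k)` contains the first sum to a power `≥ p` or the second
to a power `≥ n * k + 1`, and both of those powers lie in `I`. -/
theorem pow_mem_of_sum_pow_mem {n p k : ℕ} (x : Fin (n + 1) → R)
    (hsum : (∑ i, x i) ^ p ∈ I) (hx : ∀ i : Fin n, x i.succ ^ (k + 1) ∈ I) :
    x 0 ^ (p + n * k) ∈ I := by
  have htail : (-∑ i : Fin n, x i.succ) ^ (n * k + 1) ∈ I := by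
    rw [neg_pow]
    refine mul_mem_left _ _ ?_
    simpa using sum_pow_mem_of_forall_pow_mem Finset.univ (fun i : Fin n => x i.succ)
      fun i _ => hx i
  have hx0 : x 0 = (∑ i, x i) + -∑ i : Fin n, x i.succ := by
    rw [Fin.sum_univ_succ]
    ring
  rw [hx0]
  exact add_pow_mem_of_pow_mem_of_le I hsum htail (by omega)

end Ideal

theorem stmt_5_general {F : Type*} [Field F] (n k : ℕ) (hk : 1 ≤ k) :
    (X 0 : MvPolynomial (Fin (n + 1)) F) ^ (n * k - 1) ∈
      Ideal.span ((Set.range fun i : Fin n => (X (i.succ) : MvPolynomial (Fin (n + 1)) F) ^ k)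
        ∪ {(∑ i, X i) ^ (n - 1)}) := by
  obtain ⟨j, rfl⟩ := Nat.exists_eq_add_of_le' hk
  have hexp : n * (j + 1) - 1 = n - 1 + n * j := by
    rcases n with _ | n
    · simp
    · rw [mul_add_one]
      omega
  rw [hexp]
  exact Ideal.pow_mem_of_sum_pow_mem X (Ideal.subset_span (Or.inr rfl))
    fun i => Ideal.subset_span (Or.inl ⟨i, rfl⟩)

/-- **Example 3.2 (final reduction).** Let `F` be a field, `n ≥ 2`, `k ≥ 1`, and consider
`F[y_0, …, y_n]`. Then `y_0^(nk-1) ∈ (y_1^k, …, y_n^k, (y_0 + ⋯ + y_n)^(n-1))`. -/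
theorem stmt_5 {F : Type*} [Field F] (n k : ℕ) (hn : 2 ≤ n) (hk : 1 ≤ k) :
    (X 0 : MvPolynomial (Fin (n + 1)) F) ^ (n * k - 1) ∈
      Ideal.span ((Set.range fun i : Fin n => (X (i.succ) : MvPolynomial (Fin (n + 1)) F) ^ k)
        ∪ {(∑ i, X i) ^ (n - 1)}) :=
  stmt_5_general n k hk
end
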